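/- arXiv:math/0512177 — 3 statements merged into one kernel-verified Lean document; each statement's English description precedes it below -/
import Mathlib

section
/- Let X ~ Binomial(n,p) and R = 1 + X + C(X,2) + C(X,3). Then Var(R) = np + (1/2) n(5n-7) p^2 + (1/6) n(n-1)(19n-50) p^3 + (1/2) n(n-1)(3n^2-19n+25) p^4 + (1/4) n(n-1)(n-2)(n^2-11n+20) p^5 - (1/12) n(n-1)(n-2)(3n^2-15n+20) p^6. -/
/-- The probability that a Binomial(n,p) random variable equals k. -/
noncomputable def binPMF (n : ℕ) (p : ℝ) (k : ℕ) : ℝ :=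
  (n.choose k : ℝ) * p ^ k * (1 - p) ^ (n - k)

/-- Expectation of f(X) for X ~ Binomial(n,p). -/
noncomputable def binExp (n : ℕ) (p : ℝ) (f : ℕ → ℝ) : ℝ :=
  ∑ k ∈ Finset.range (n + 1), binPMF n p k * f k

lemma cast_descFactorial (k r : ℕ) :
    (k.descFactorial r : ℝ) = ∏ i ∈ Finset.range r, ((k : ℝ) - i) := by
  induction r with
  | zero => simp
  | succ r ih =>
    by_cases h : r ≤ k
    · rw [Nat.descFactorial_succ, Finset.prod_range_succ, ← ih]
      push_cast [h]
      ring
    · rw [Nat.descFactorial_eq_zero_iff_lt.2 (by omega : k < r + 1), Nat.cast_zero]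
      symm
      apply Finset.prod_eq_zero (Finset.mem_range.2 (show k < r + 1 by omega))
      simp

lemma binExp_descFactorial (n r : ℕ) (p : ℝ) :
    binExp n p (fun k => (k.descFactorial r : ℝ)) = (n.descFactorial r : ℝ) * p ^ r := by
  by_cases h : r ≤ n
  · unfold binExp binPMF
    have hn : n + 1 = r + (n + 1 - r) := by omega
    rw [hn, Finset.sum_range_add]
    beta_reduce
    have h0 : ∀ k ∈ Finset.range r,
        (n.choose k : ℝ) * p ^ k * (1 - p) ^ (n - k) * (k.descFactorial r : ℝ) = 0 := by
      intro k hk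
      rw [Nat.descFactorial_eq_zero_iff_lt.2 (Finset.mem_range.1 hk)]
      simp
    rw [Finset.sum_congr rfl h0, Finset.sum_const_zero, zero_add]
    have hterm : ∀ j ∈ Finset.range (n + 1 - r),
        (n.choose (r + j) : ℝ) * p ^ (r + j) * (1 - p) ^ (n - (r + j)) *
          ((r + j).descFactorial r : ℝ) =
        (n.descFactorial r : ℝ) * p ^ r *
          (p ^ j * (1 - p) ^ (n - r - j) * ((n - r).choose j : ℝ)) := by
      intro j hj
      have hj' : r + j ≤ n := by
        have := Finset.mem_range.1 hj; omega
      have key : n.choose (r + j) * (r + j).descFactorial r =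
          n.descFactorial r * (n - r).choose j := by
        rw [Nat.descFactorial_eq_factorial_mul_choose,
            Nat.descFactorial_eq_factorial_mul_choose]
        have := Nat.choose_mul (n := n) (k := r + j) (s := r) (Nat.le_add_right r j)
        rw [Nat.add_sub_cancel_left] at this
        calc n.choose (r + j) * (r.factorial * (r + j).choose r)
            = r.factorial * (n.choose (r + j) * (r + j).choose r) := by ring
          _ = r.factorial * (n.choose r * (n - r).choose j) := by rw [this]
          _ = r.factorial * n.choose r * (n - r).choose j := by ring
      have hsub : n - (r + j) = n - r - j := by omega
      have := congrArg (fun m : ℕ => (m : ℝ)) key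
      push_cast at this
      rw [hsub, pow_add]
      linear_combination (p ^ r * p ^ j * (1 - p) ^ (n - r - j)) * this
    rw [Finset.sum_congr rfl hterm, ← Finset.mul_sum]
    have hnr : n + 1 - r = (n - r) + 1 := by omega
    have := add_pow p (1 - p) (n - r)
    rw [show p + (1 - p) = 1 by ring, one_pow] at this
    rw [hnr, ← this]
    ring
  · push_neg at h
    unfold binExp
    rw [Nat.descFactorial_eq_zero_iff_lt.2 h]
    have h0 : ∀ k ∈ Finset.range (n + 1),
        binPMF n p k * (k.descFactorial r : ℝ) = 0 := by
      intro k hk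
      rw [Nat.descFactorial_eq_zero_iff_lt.2 (by have := Finset.mem_range.1 hk; omega)]
      simp
    rw [Finset.sum_congr rfl h0]
    simp

lemma binExp_comb (n : ℕ) (p : ℝ) (f : ℕ → ℝ) (m : ℕ) (c : ℕ → ℝ)
    (h : ∀ k, f k = ∑ r ∈ Finset.range m, c r * (k.descFactorial r : ℝ)) :
    binExp n p f = ∑ r ∈ Finset.range m, c r * ((n.descFactorial r : ℝ) * p ^ r) := by
  unfold binExp
  calc ∑ k ∈ Finset.range (n + 1), binPMF n p k * f k
      = ∑ k ∈ Finset.range (n + 1), ∑ r ∈ Finset.range m,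
          c r * (binPMF n p k * (k.descFactorial r : ℝ)) := by
        refine Finset.sum_congr rfl fun k _ => ?_
        rw [h k, Finset.mul_sum]
        exact Finset.sum_congr rfl fun r _ => by ring
    _ = ∑ r ∈ Finset.range m, c r *
          ∑ k ∈ Finset.range (n + 1), binPMF n p k * (k.descFactorial r : ℝ) := by
        rw [Finset.sum_comm]
        exact Finset.sum_congr rfl fun r _ => (Finset.mul_sum _ _ _).symm
    _ = _ := by
        refine Finset.sum_congr rfl fun r _ => ?_
        rw [show (∑ k ∈ Finset.range (n + 1), binPMF n p k * (k.descFactorial r : ℝ))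
              = binExp n p (fun k => (k.descFactorial r : ℝ)) from rfl,
            binExp_descFactorial]

/-- If X ~ Binomial(n,p) and R = 1 + X + C(X,2) + C(X,3), then
Var(R) = np + (1/2)n(5n-7)p² + (1/6)n(n-1)(19n-50)p³ + (1/2)n(n-1)(3n²-19n+25)p⁴
  + (1/4)n(n-1)(n-2)(n²-11n+20)p⁵ − (1/12)n(n-1)(n-2)(3n²-15n+20)p⁶. -/
theorem variance_regions_3D (n : ℕ) (p : ℝ) (hp0 : 0 ≤ p) (hp1 : p ≤ 1) :
    binExp n p (fun k => (1 + (k : ℝ) + (k : ℝ) * ((k : ℝ) - 1) / 2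
        + (k : ℝ) * ((k : ℝ) - 1) * ((k : ℝ) - 2) / 6) ^ 2)
      - (binExp n p (fun k => 1 + (k : ℝ) + (k : ℝ) * ((k : ℝ) - 1) / 2
        + (k : ℝ) * ((k : ℝ) - 1) * ((k : ℝ) - 2) / 6)) ^ 2 =
      n * p + (1 / 2) * n * (5 * n - 7) * p ^ 2
        + (1 / 6) * n * (n - 1) * (19 * n - 50) * p ^ 3
        + (1 / 2) * n * (n - 1) * (3 * n ^ 2 - 19 * n + 25) * p ^ 4
        + (1 / 4) * n * (n - 1) * (n - 2) * (n ^ 2 - 11 * n + 20) * p ^ 5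
        - (1 / 12) * n * (n - 1) * (n - 2) * (3 * n ^ 2 - 15 * n + 20) * p ^ 6 := by
  have h1 := binExp_comb n p
      (fun k => 1 + (k : ℝ) + (k : ℝ) * ((k : ℝ) - 1) / 2
        + (k : ℝ) * ((k : ℝ) - 1) * ((k : ℝ) - 2) / 6)
      4 (fun r => [(1 : ℝ), 1, 1/2, 1/6].getD r 0)
      (by
        intro k
        simp only [Finset.sum_range_succ, Finset.sum_range_zero, cast_descFactorial,
          Finset.prod_range_succ, Finset.prod_range_zero, List.getD]
        norm_num
        ring)
  have h2 := binExp_comb n p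
      (fun k => (1 + (k : ℝ) + (k : ℝ) * ((k : ℝ) - 1) / 2
        + (k : ℝ) * ((k : ℝ) - 1) * ((k : ℝ) - 2) / 6) ^ 2)
      7 (fun r => [(1 : ℝ), 3, 9/2, 9/2, 25/12, 5/12, 1/36].getD r 0)
      (by
        intro k
        simp only [Finset.sum_range_succ, Finset.sum_range_zero, cast_descFactorial,
          Finset.prod_range_succ, Finset.prod_range_zero, List.getD]
        norm_num
        ring)
  rw [h1, h2]
  simp only [Finset.sum_range_succ, Finset.sum_range_zero, cast_descFactorial,
    Finset.prod_range_succ, Finset.prod_range_zero, List.getD]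
  norm_num
  ring
end

section
/- Fix p with 0 < p < 1, let X_n ~ Binomial(n,p) and R_n = 1 + X_n + C(X_n,2) + C(X_n,3). Then Var(R_n) / ((1/4) n^5 p^5 (1-p)) → 1 as n → ∞. -/
lemma binExp_one (n : ℕ) (p : ℝ) : binExp n p (fun _ => 1) = 1 := by
  simp only [binExp, binPMF, mul_one]
  calc ∑ k ∈ Finset.range (n+1), (n.choose k : ℝ) * p^k * (1-p)^(n-k)
      = ∑ k ∈ Finset.range (n+1), p^k * (1-p)^(n-k) * (n.choose k) := by
        apply Finset.sum_congr rfl; intros; ring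
    _ = (p + (1-p))^n := (add_pow p (1-p) n).symm
    _ = 1 := by ring

lemma binExp_shift (n : ℕ) (p : ℝ) (h : ℕ → ℝ) :
    binExp (n+1) p (fun k => (k:ℝ) * h k) = ((n:ℝ)+1) * p * binExp n p (fun j => h (j+1)) := by
  simp only [binExp, binPMF]
  rw [Finset.sum_range_succ']
  simp only [Nat.cast_zero, zero_mul, mul_zero, add_zero]
  rw [Finset.mul_sum]
  apply Finset.sum_congr rfl
  intro j hj
  have hc : (((n+1).choose (j+1) : ℕ) : ℝ) * ((j:ℝ)+1) = ((n:ℝ)+1) * (n.choose j : ℝ) := by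
    have h := Nat.add_one_mul_choose_eq n j
    have h4 : (((n+1) * n.choose j : ℕ) : ℝ) = (((n+1).choose (j+1) * (j+1) : ℕ) : ℝ) := by
      exact_mod_cast congrArg (Nat.cast (R := ℝ)) h
    push_cast at h4
    linarith
  have hsub : n + 1 - (j + 1) = n - j := by omega
  rw [hsub]
  push_cast
  linear_combination (p ^ (j+1) * (1-p)^(n-j) * h (j+1)) * hc

lemma binExp_prod (p : ℝ) : ∀ (r n : ℕ),
    binExp n p (fun k => ∏ i ∈ Finset.range r, ((k:ℝ) - i)) =
      (∏ i ∈ Finset.range r, ((n:ℝ) - i)) * p ^ r := by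
  intro r
  induction r with
  | zero => intro n; simpa using binExp_one n p
  | succ r ih =>
    intro n
    cases n with
    | zero =>
      have h0 : (∏ x ∈ Finset.range (r+1), (-(x:ℝ))) = 0 := by
        apply Finset.prod_eq_zero (Finset.mem_range.mpr (Nat.succ_pos r))
        simp
      simp [binExp, binPMF, h0]
    | succ m =>
      have hpt : (fun k : ℕ => ∏ i ∈ Finset.range (r+1), ((k:ℝ) - i))
          = fun k : ℕ => (k:ℝ) * ∏ i ∈ Finset.range r, ((k:ℝ) - ((i:ℝ)+1)) := by
        funext k
        rw [Finset.prod_range_succ']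
        push_cast
        ring
      rw [hpt, binExp_shift m p (fun k => ∏ i ∈ Finset.range r, ((k:ℝ) - ((i:ℝ)+1)))]
      have h2 : (fun j : ℕ => ∏ i ∈ Finset.range r, (((j+1:ℕ):ℝ) - ((i:ℝ)+1)))
          = fun j : ℕ => ∏ i ∈ Finset.range r, ((j:ℝ) - i) := by
        funext j
        apply Finset.prod_congr rfl
        intro i _
        push_cast; ring
      rw [h2, ih m]
      have h3 : (∏ i ∈ Finset.range (r+1), (((m+1:ℕ):ℝ) - i))
          = ((m:ℝ)+1) * ∏ i ∈ Finset.range r, ((m:ℝ) - i) := by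
        rw [Finset.prod_range_succ']
        have : ∀ i ∈ Finset.range r, (((m+1:ℕ):ℝ) - ((i+1:ℕ):ℝ)) = ((m:ℝ) - i) := by
          intro i _; push_cast; ring
        rw [Finset.prod_congr rfl this]
        push_cast; ring
      rw [h3]
      ring

lemma binExp_combo (n : ℕ) (p : ℝ) (g : ℕ → ℝ) (c0 c1 c2 c3 c4 c5 c6 : ℝ)
    (hg : ∀ k : ℕ, g k = c0 + c1 * (∏ i ∈ Finset.range 1, ((k:ℝ) - i))
      + c2 * (∏ i ∈ Finset.range 2, ((k:ℝ) - i))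
      + c3 * (∏ i ∈ Finset.range 3, ((k:ℝ) - i))
      + c4 * (∏ i ∈ Finset.range 4, ((k:ℝ) - i))
      + c5 * (∏ i ∈ Finset.range 5, ((k:ℝ) - i))
      + c6 * (∏ i ∈ Finset.range 6, ((k:ℝ) - i))) :
    binExp n p g = c0 + c1 * ((∏ i ∈ Finset.range 1, ((n:ℝ) - i)) * p ^ 1)
      + c2 * ((∏ i ∈ Finset.range 2, ((n:ℝ) - i)) * p ^ 2)
      + c3 * ((∏ i ∈ Finset.range 3, ((n:ℝ) - i)) * p ^ 3)
      + c4 * ((∏ i ∈ Finset.range 4, ((n:ℝ) - i)) * p ^ 4)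
      + c5 * ((∏ i ∈ Finset.range 5, ((n:ℝ) - i)) * p ^ 5)
      + c6 * ((∏ i ∈ Finset.range 6, ((n:ℝ) - i)) * p ^ 6) := by
  have e : ∀ k, binPMF n p k * g k =
      c0 * (binPMF n p k * 1)
      + c1 * (binPMF n p k * (∏ i ∈ Finset.range 1, ((k:ℝ) - i)))
      + c2 * (binPMF n p k * (∏ i ∈ Finset.range 2, ((k:ℝ) - i)))
      + c3 * (binPMF n p k * (∏ i ∈ Finset.range 3, ((k:ℝ) - i)))
      + c4 * (binPMF n p k * (∏ i ∈ Finset.range 4, ((k:ℝ) - i)))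
      + c5 * (binPMF n p k * (∏ i ∈ Finset.range 5, ((k:ℝ) - i)))
      + c6 * (binPMF n p k * (∏ i ∈ Finset.range 6, ((k:ℝ) - i))) := by
    intro k; rw [hg k]; ring
  unfold binExp
  rw [Finset.sum_congr rfl (fun k _ => e k)]
  simp only [Finset.sum_add_distrib, ← Finset.mul_sum]
  have B0 : (∑ k ∈ Finset.range (n+1), binPMF n p k * 1) = 1 := binExp_one n p
  have B1 : (∑ k ∈ Finset.range (n+1), binPMF n p k * ∏ i ∈ Finset.range 1, ((k:ℝ) - i))
      = (∏ i ∈ Finset.range 1, ((n:ℝ) - i)) * p ^ 1 := binExp_prod p 1 n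
  have B2 : (∑ k ∈ Finset.range (n+1), binPMF n p k * ∏ i ∈ Finset.range 2, ((k:ℝ) - i))
      = (∏ i ∈ Finset.range 2, ((n:ℝ) - i)) * p ^ 2 := binExp_prod p 2 n
  have B3 : (∑ k ∈ Finset.range (n+1), binPMF n p k * ∏ i ∈ Finset.range 3, ((k:ℝ) - i))
      = (∏ i ∈ Finset.range 3, ((n:ℝ) - i)) * p ^ 3 := binExp_prod p 3 n
  have B4 : (∑ k ∈ Finset.range (n+1), binPMF n p k * ∏ i ∈ Finset.range 4, ((k:ℝ) - i))
      = (∏ i ∈ Finset.range 4, ((n:ℝ) - i)) * p ^ 4 := binExp_prod p 4 n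
  have B5 : (∑ k ∈ Finset.range (n+1), binPMF n p k * ∏ i ∈ Finset.range 5, ((k:ℝ) - i))
      = (∏ i ∈ Finset.range 5, ((n:ℝ) - i)) * p ^ 5 := binExp_prod p 5 n
  have B6 : (∑ k ∈ Finset.range (n+1), binPMF n p k * ∏ i ∈ Finset.range 6, ((k:ℝ) - i))
      = (∏ i ∈ Finset.range 6, ((n:ℝ) - i)) * p ^ 6 := binExp_prod p 6 n
  rw [B0, B1, B2, B3, B4, B5, B6]
  ring

set_option maxHeartbeats 1000000

/-- For fixed p ∈ (0,1), with Xₙ ~ Binomial(n,p) and Rₙ = 1 + Xₙ + C(Xₙ,2) + C(Xₙ,3),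
Var(Rₙ) / ((1/4)n⁵p⁵(1-p)) → 1 as n → ∞. -/
theorem variance_regions_3D_asymptotics (p : ℝ) (hp0 : 0 < p) (hp1 : p < 1) :
    Filter.Tendsto
      (fun n : ℕ =>
        (binExp n p (fun k => (1 + (k : ℝ) + (k : ℝ) * ((k : ℝ) - 1) / 2
            + (k : ℝ) * ((k : ℝ) - 1) * ((k : ℝ) - 2) / 6) ^ 2)
          - (binExp n p (fun k => 1 + (k : ℝ) + (k : ℝ) * ((k : ℝ) - 1) / 2
            + (k : ℝ) * ((k : ℝ) - 1) * ((k : ℝ) - 2) / 6)) ^ 2)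
        / ((1 / 4) * (n : ℝ) ^ 5 * p ^ 5 * (1 - p)))
      Filter.atTop (nhds 1) := by
  have hpne : p ≠ 0 := ne_of_gt hp0
  have h1p : (1:ℝ) - p ≠ 0 := by linarith
  -- expectations
  have hE : ∀ n : ℕ, binExp n p (fun k => 1 + (k : ℝ) + (k : ℝ) * ((k : ℝ) - 1) / 2
      + (k : ℝ) * ((k : ℝ) - 1) * ((k : ℝ) - 2) / 6)
      = 1 + 1 * ((∏ i ∈ Finset.range 1, ((n:ℝ) - i)) * p ^ 1)
      + (1/2) * ((∏ i ∈ Finset.range 2, ((n:ℝ) - i)) * p ^ 2)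
      + (1/6) * ((∏ i ∈ Finset.range 3, ((n:ℝ) - i)) * p ^ 3)
      + 0 * ((∏ i ∈ Finset.range 4, ((n:ℝ) - i)) * p ^ 4)
      + 0 * ((∏ i ∈ Finset.range 5, ((n:ℝ) - i)) * p ^ 5)
      + 0 * ((∏ i ∈ Finset.range 6, ((n:ℝ) - i)) * p ^ 6) := by
    intro n
    apply binExp_combo n p _ 1 1 (1/2) (1/6) 0 0 0
    intro k
    simp only [Finset.prod_range_succ, Finset.prod_range_zero]
    push_cast
    ring
  have hE2 : ∀ n : ℕ, binExp n p (fun k => (1 + (k : ℝ) + (k : ℝ) * ((k : ℝ) - 1) / 2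
      + (k : ℝ) * ((k : ℝ) - 1) * ((k : ℝ) - 2) / 6) ^ 2)
      = 1 + 3 * ((∏ i ∈ Finset.range 1, ((n:ℝ) - i)) * p ^ 1)
      + (9/2) * ((∏ i ∈ Finset.range 2, ((n:ℝ) - i)) * p ^ 2)
      + (9/2) * ((∏ i ∈ Finset.range 3, ((n:ℝ) - i)) * p ^ 3)
      + (25/12) * ((∏ i ∈ Finset.range 4, ((n:ℝ) - i)) * p ^ 4)
      + (5/12) * ((∏ i ∈ Finset.range 5, ((n:ℝ) - i)) * p ^ 5)
      + (1/36) * ((∏ i ∈ Finset.range 6, ((n:ℝ) - i)) * p ^ 6) := by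
    intro n
    apply binExp_combo n p _ 1 3 (9/2) (9/2) (25/12) (5/12) (1/36)
    intro k
    simp only [Finset.prod_range_succ, Finset.prod_range_zero]
    push_cast
    ring
  -- coefficients of the expansion in 1/n
  set A : ℝ := ((3/2)*p^4 - (7/2)*p^5 + 2*p^6) / ((1/4)*p^5*(1-p)) with hA
  set B : ℝ := ((19/6)*p^3 - 11*p^4 + (55/4)*p^5 - (71/12)*p^6) / ((1/4)*p^5*(1-p)) with hB
  set C : ℝ := ((5/2)*p^2 - (23/2)*p^3 + 22*p^4 - (41/2)*p^5 + (15/2)*p^6) / ((1/4)*p^5*(1-p)) with hC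
  set D : ℝ := (p - (7/2)*p^2 + (25/3)*p^3 - (25/2)*p^4 + 10*p^5 - (10/3)*p^6) / ((1/4)*p^5*(1-p)) with hD
  have key : Filter.Tendsto (fun n : ℕ =>
      1 + A * ((n:ℝ)⁻¹) + B * ((n:ℝ)⁻¹)^2 + C * ((n:ℝ)⁻¹)^3 + D * ((n:ℝ)⁻¹)^4)
      Filter.atTop (nhds 1) := by
    have hg : Continuous (fun x : ℝ => 1 + A * x + B * x^2 + C * x^3 + D * x^4) := by
      continuity
    have h2 := (hg.tendsto 0).comp tendsto_inv_atTop_nhds_zero_nat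
    simp only [Function.comp_def] at h2
    have h1 : nhds (1:ℝ) = nhds (1 + A*0 + B*0^2 + C*0^3 + D*0^4) := by norm_num
    rw [h1]
    exact h2
  apply key.congr'
  filter_upwards [Filter.eventually_ge_atTop 1] with n hn
  have hn0 : (n:ℝ) ≠ 0 := by
    have : (1:ℝ) ≤ (n:ℝ) := by exact_mod_cast hn
    linarith
  rw [hE n, hE2 n, hA, hB, hC, hD]
  simp only [Finset.prod_range_succ, Finset.prod_range_zero]
  push_cast
  field_simp
  ring
end

section
/- The variance of the seven areas, V(x) = (1/7)[α₁(x)² + 3α₂(x)² + 3α₃(x)² ] − (π/7)², is minimized over [0, π/3] at x = π/3. -/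
open Real

/-- Area of the central triangle. -/
noncomputable def alpha1 (x : ℝ) : ℝ := 3 * Real.sqrt 3 * Real.sin (π / 6 - x / 2) ^ 2

/-- Area of each circular triangle. -/
noncomputable def alpha2 (x : ℝ) : ℝ := x / 2 - 2 * Real.sin (x / 2) * Real.sin (π / 6 - x / 2)

/-- Area of each circular trapezoid. -/
noncomputable def alpha3 (x : ℝ) : ℝ :=
  π / 3 - x / 2 + 2 * Real.sin (x / 2) * Real.sin (π / 6 - x / 2)
    - Real.sqrt 3 * Real.sin (π / 6 - x / 2) ^ 2

/-- The variance of the seven areas. -/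
noncomputable def areaVar (x : ℝ) : ℝ :=
  (1 / 7) * (alpha1 x ^ 2 + 3 * alpha2 x ^ 2 + 3 * alpha3 x ^ 2) - (π / 7) ^ 2

set_option maxHeartbeats 1000000 in
/-- The variance of the seven areas is minimized over [0, π/3] at x = π/3. -/
theorem variance_minimized_at_endpoint :
    ∀ x ∈ Set.Icc (0 : ℝ) (π / 3), areaVar (π / 3) ≤ areaVar x := by
  intro x hx
  obtain ⟨hx0, hx1⟩ := hx
  have hπl : (31415 : ℝ) / 10000 < π := by
    have := Real.pi_gt_d6; rw [show (3.141592:ℝ) = 3141592/1000000 by norm_num] at this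
    linarith
  have hπu : π < (31416 : ℝ) / 10000 := by
    have := Real.pi_lt_d6; rw [show (3.141593:ℝ) = 3141593/1000000 by norm_num] at this
    linarith
  obtain ⟨r, hrdef⟩ : ∃ r : ℝ, r = Real.sqrt 3 := ⟨_, rfl⟩
  have hr0 : 0 ≤ r := hrdef ▸ Real.sqrt_nonneg 3
  have hr : r ^ 2 = 3 := hrdef ▸ Real.sq_sqrt (by norm_num)
  have hrl : (1732 : ℝ) / 1000 ≤ r := by nlinarith
  have hru : r ≤ (17321 : ℝ) / 10000 := by nlinarith
  obtain ⟨v, hvdef⟩ : ∃ v : ℝ, v = π / 6 - x / 2 := ⟨_, rfl⟩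
  have hv0 : 0 ≤ v := by rw [hvdef]; linarith
  have hv1 : v ≤ π / 6 := by rw [hvdef]; linarith
  obtain ⟨s, hsdef⟩ : ∃ s : ℝ, s = Real.sin v := ⟨_, rfl⟩
  obtain ⟨c, hcdef⟩ : ∃ c : ℝ, c = Real.cos v := ⟨_, rfl⟩
  have hs0 : 0 ≤ s := hsdef ▸ Real.sin_nonneg_of_nonneg_of_le_pi hv0 (by linarith)
  have hsv : s ≤ v := hsdef ▸ Real.sin_le hv0
  have hs1 : s ≤ (5236 : ℝ) / 10000 := by linarith
  have hc1 : c ≤ 1 := hcdef ▸ Real.cos_le_one v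
  have hc0 : 0 ≤ c := hcdef ▸ Real.cos_nonneg_of_mem_Icc ⟨by linarith, by linarith⟩
  have hcs : c ^ 2 = 1 - s ^ 2 := by rw [hcdef, hsdef]; exact Real.cos_sq' v
  have hc2 : 1 - s ^ 2 ≤ c := by nlinarith
  have hxv : x / 2 = π / 6 - v := by rw [hvdef]; ring
  have ht : Real.sin (x / 2) = c / 2 - r / 2 * s := by
    rw [hxv, Real.sin_sub, Real.sin_pi_div_six, Real.cos_pi_div_six,
      ← hsdef, ← hcdef, ← hrdef]
    ring
  obtain ⟨p, hpdef⟩ : ∃ p : ℝ, p = v + s * c - r * s ^ 2 := ⟨_, rfl⟩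
  obtain ⟨d, hddef⟩ : ∃ d : ℝ, d = r * s ^ 2 := ⟨_, rfl⟩
  have hd0 : 0 ≤ d := by rw [hddef]; positivity
  have hvx : π / 6 - x / 2 = v := hvdef.symm
  have e1 : alpha1 x = 3 * d := by
    rw [alpha1, hvx, ← hsdef, ← hrdef, hddef]; ring
  have e2 : alpha2 x = π / 6 - p := by
    rw [alpha2, hvx, ← hsdef, ht, hpdef, hxv]; ring
  have e3 : alpha3 x = π / 6 + p - d := by
    rw [alpha3, hvx, ← hsdef, ← hrdef, ht, hpdef, hddef, hxv]; ring
  have h0 : Real.sin (π / 6 - π / 3 / 2) = 0 := by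
    rw [show π / 6 - π / 3 / 2 = 0 by ring, Real.sin_zero]
  have f1 : alpha1 (π / 3) = 0 := by rw [alpha1, h0]; ring
  have f2 : alpha2 (π / 3) = π / 6 := by rw [alpha2, h0]; ring
  have f3 : alpha3 (π / 3) = π / 6 := by rw [alpha3, h0]; ring
  have hp1 : 2 * s - r * s ^ 2 - s ^ 3 ≤ p := by
    have h := mul_le_mul_of_nonneg_left hc2 hs0
    rw [hpdef]; nlinarith
  have hh : 0 ≤ 24 - 36 * r * s + 48 * s ^ 2 + 18 * r * s ^ 3 + 6 * s ^ 4 - π * r := by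
    nlinarith [sq_nonneg (s - 9/20), mul_nonneg hs0 (sq_nonneg (s - 9/20)),
      mul_nonneg (mul_nonneg hs0 hs0) hs0, sq_nonneg s, sq_nonneg (s - 1/2)]
  have hmain : 0 ≤ 6 * (2 * s - r * s ^ 2 - s ^ 3) ^ 2
      - 6 * (2 * s - r * s ^ 2 - s ^ 3) * d + 12 * d ^ 2 - π * d := by
    have h := mul_nonneg (sq_nonneg s) hh
    rw [hddef]; nlinarith [h, hr]
  have hQ : 0 ≤ 4 - 3 * r * s - 2 * s ^ 2 := by nlinarith
  have h2 : 0 ≤ p + (2 * s - r * s ^ 2 - s ^ 3) - d := by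
    have h := mul_nonneg hs0 hQ
    rw [hddef]; nlinarith [hp1]
  have hP : 0 ≤ 6 * p ^ 2 - 6 * p * d + 12 * d ^ 2 - π * d := by
    nlinarith [mul_nonneg (sub_nonneg.2 hp1) h2, hmain]
  have gL : areaVar (π/3) = (1/7)*(π^2/6) - (π/7)^2 := by
    rw [areaVar, f1, f2, f3]; ring
  have gR : areaVar x = (1/7)*((3*d)^2 + 3*(π/6 - p)^2 + 3*(π/6 + p - d)^2) - (π/7)^2 := by
    rw [areaVar, e1, e2, e3]
  rw [gL, gR]
  have expand : (1/7)*((3*d)^2 + 3*(π/6 - p)^2 + 3*(π/6 + p - d)^2) - (π/7)^2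
      = ((1/7)*(π^2/6) - (π/7)^2) + (1/7)*(6 * p ^ 2 - 6 * p * d + 12 * d ^ 2 - π * d) := by
    ring
  rw [expand]
  linarith [hP]
end
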